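/- Let J = S \ {s_{i-2}, s_{i-1}, s_i} and let u, v ∈ (S_n)^J. For h = 1, 2, 3 and 1 ≤ j ≤ n define b_{h,j}(u,v) = |{r ∈ u^{-1}([i-3+h]) : r < j}| − |{r ∈ v^{-1}([i-3+h]) : r < j}|. Then u ≤ v in the Bruhat order if and only if b_{h,j}(u,v) ≥ 0 for all h ∈ {1,2,3} and all 1 ≤ j ≤ n. -/

import Mathlib

open Finset Polynomial

/-- The inversion number (Coxeter length) of a permutation of `ℕ`, counted on `{1, …, n}`. -/
def invNum (n : ℕ) (u : Equiv.Perm ℕ) : ℕ :=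
  (((Finset.Icc 1 n) ×ˢ (Finset.Icc 1 n)).filter
    (fun p => p.1 < p.2 ∧ u p.2 < u p.1)).card

/-- `u` is a member of `S_n`: it fixes every point outside `{1, …, n}`. -/
def IsPermOn (n : ℕ) (u : Equiv.Perm ℕ) : Prop :=
  ∀ m, m ∉ Finset.Icc 1 n → u m = m

/-- The adjacent transposition `s_i`, interchanging `i` and `i + 1`. -/
def sAdj (i : ℕ) : Equiv.Perm ℕ := Equiv.swap i (i + 1)

/-- The Bruhat order on `S_n`: `u ≤ v` iff `v` is obtained from `u` by successively
multiplying on the right by transpositions, increasing the length at each step. -/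
def BruhatLE (n : ℕ) (u v : Equiv.Perm ℕ) : Prop :=
  Relation.ReflTransGen
    (fun a b => invNum n a < invNum n b ∧
      ∃ i j, 1 ≤ i ∧ i < j ∧ j ≤ n ∧ b = a * Equiv.swap i j) u v

/-- `(S_n)^J`, the minimal coset representatives, where `J = S \ {s_e : e ∈ E}`. -/
def MinReps (n : ℕ) (E : Set ℕ) (u : Equiv.Perm ℕ) : Prop :=
  ∀ j, 1 ≤ j → j ≤ n - 1 → j ∉ E → invNum n u < invNum n (sAdj j * u)

/-- `|{r ∈ u⁻¹([m]) : r < j}|`, the number of positions `r < j` of `u` holding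
an element of `{1, …, m}`. -/
def posLT (n m j : ℕ) (u : Equiv.Perm ℕ) : ℕ :=
  ((Finset.Icc 1 n).filter (fun r => r < j ∧ u r ∈ Finset.Icc 1 m)).card

/-- Deodhar's recursion with `x = q` for the parabolic `R`-polynomials of `S_n`,
for `J = S \ {s_e : e ∈ E}`. -/
def IsRFamilyQ (n : ℕ) (E : Set ℕ)
    (R : Equiv.Perm ℕ → Equiv.Perm ℕ → Polynomial ℤ) : Prop :=
  (∀ u v, MinReps n E u → MinReps n E v → ¬ BruhatLE n u v → R u v = 0) ∧
  (∀ u, MinReps n E u → R u u = 1) ∧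
  (∀ u v, MinReps n E u → MinReps n E v → BruhatLE n u v → u ≠ v →
    ∀ j, 1 ≤ j → j ≤ n - 1 → v (j + 1) < v j →
      ((u (j + 1) < u j → R u v = R (u * sAdj j) (v * sAdj j)) ∧
       (¬ u (j + 1) < u j → MinReps n E (u * sAdj j) →
          R u v = X * R (u * sAdj j) (v * sAdj j) + (X - 1) * R u (v * sAdj j)) ∧
       (¬ u (j + 1) < u j → ¬ MinReps n E (u * sAdj j) →
          R u v = - R u (v * sAdj j))))

/-!
The proof goes through the tableau criterion: `u ≤ v` in the Bruhat order iff
`posLT n m j v ≤ posLT n m j u` for all `m, j`. A length-increasing step `u ↦ u * (a b)`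
exchanges values `u a < u b` and can only lower these counts. Conversely, if `w ≠ v` dominates
`v`, let `a` be the first position where they differ and `b > a` the first position with
`w a < w b ≤ v a`; then `w * (a b)` is longer than `w` and still dominates `v`, and we recurse.

For a minimal coset representative `u` with `J = S \ {s_e : e ∈ E}`, the map `u⁻¹` increases
between consecutive elements `l < L` of `E ∪ {0, n}`. So the values in `(l, L]` placed before
position `j` form an initial segment of `(l, L]`, which gives
`posLT n m j u = min (posLT n l j u + (m - l)) (posLT n L j u)` for `l ≤ m ≤ L`: the counts for
`m ∈ E` control all the others.
-/

lemma card_filter_Ioc_lt_eq_min {α : Type*} [LinearOrder α] {f : ℕ → α} {l m L : ℕ}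
    (hf : MonotoneOn f (Set.Ioc l L)) (hmL : m ≤ L) (t : α) :
    #{c ∈ Ioc l m | f c < t} = min (m - l) #{c ∈ Ioc l L | f c < t} := by
  by_cases hall : ∀ c ∈ Ioc l m, f c < t
  · have hcard : #{c ∈ Ioc l m | f c < t} = m - l := by
      rw [filter_true_of_mem hall, Nat.card_Ioc]
    rw [hcard, min_eq_left]
    exact hcard ▸ card_le_card (filter_subset_filter _ (Ioc_subset_Ioc_right hmL))
  · obtain ⟨c₀, hc₀, hfc₀⟩ := not_forall₂.1 hall
    have hc₀' := mem_Ioc.1 hc₀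
    have heq : {c ∈ Ioc l L | f c < t} = {c ∈ Ioc l m | f c < t} := by
      ext c
      simp only [mem_filter, mem_Ioc]
      refine ⟨fun ⟨⟨hlc, hcL⟩, hct⟩ => ⟨⟨hlc, not_lt.1 fun _ => hfc₀ ?_⟩, hct⟩,
        fun ⟨⟨hlc, hcm⟩, hct⟩ => ⟨⟨hlc, hcm.trans hmL⟩, hct⟩⟩
      exact (hf ⟨hc₀'.1, hc₀'.2.trans hmL⟩ ⟨hlc, hcL⟩ (by omega)).trans_lt hct
    rw [heq, min_eq_right ((card_filter_le _ _).trans (Nat.card_Ioc l m).le)]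

namespace IsPermOn

variable {n : ℕ} {u : Equiv.Perm ℕ}

lemma apply_mem (hu : IsPermOn n u) {x : ℕ} (hx : x ∈ Icc 1 n) : u x ∈ Icc 1 n := by
  by_contra h
  exact h (by rwa [u.injective (hu _ h)])

lemma inv (hu : IsPermOn n u) : IsPermOn n u⁻¹ := fun m hm => by
  rw [Equiv.Perm.inv_eq_iff_eq, hu m hm]

lemma mul_swap (hu : IsPermOn n u) {a b : ℕ} (ha : a ∈ Icc 1 n) (hb : b ∈ Icc 1 n) :
    IsPermOn n (u * Equiv.swap a b) := fun m hm => by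
  rw [Equiv.Perm.mul_apply, Equiv.swap_apply_of_ne_of_ne (by rintro rfl; exact hm ha)
    (by rintro rfl; exact hm hb), hu m hm]

end IsPermOn

section Inversions

variable {n : ℕ} {u : Equiv.Perm ℕ}

def inversions (n : ℕ) (u : Equiv.Perm ℕ) : Finset (ℕ × ℕ) :=
  (Icc 1 n ×ˢ Icc 1 n).filter fun p => p.1 < p.2 ∧ u p.2 < u p.1

lemma mem_inversions {x y : ℕ} :
    (x, y) ∈ inversions n u ↔ x ∈ Icc 1 n ∧ y ∈ Icc 1 n ∧ x < y ∧ u y < u x := by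
  simp only [inversions, mem_filter, mem_product, and_assoc]

lemma invNum_le (n : ℕ) (u : Equiv.Perm ℕ) : invNum n u ≤ n * n :=
  (card_filter_le _ _).trans (by simp)

lemma invNum_lt_invNum_mul_swap {a b : ℕ} (ha : a ∈ Icc 1 n) (hb : b ∈ Icc 1 n) (hab : a < b)
    (hu : u a < u b) : invNum n u < invNum n (u * Equiv.swap a b) := by
  set s := Equiv.swap a b
  have hss : ∀ x, s (s x) = x := Equiv.swap_apply_self a b
  have hs : ∀ x ∈ Icc 1 n, s x ∈ Icc 1 n := fun x hx => by
    simp only [s, Equiv.swap_apply_def]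
    split_ifs <;> assumption
  -- Relabel an inversion through `s` unless `s` reverses its order. The inversions of `u` that
  -- `s` reverses are `(a, y)` with `y < b` and `(x, b)` with `a < x`; they stay inversions of
  -- `u * s` because `u a < u b`.
  let φ : ℕ × ℕ → ℕ × ℕ := fun p => if s p.1 < s p.2 then (s p.1, s p.2) else p
  have hφφ : ∀ p ∈ inversions n u, φ (φ p) = p := by
    rintro ⟨x, y⟩ hp
    by_cases h : s x < s y <;> simp [φ, h, hss, (mem_inversions.1 hp).2.2.1]
  have hmaps : ∀ p ∈ inversions n u, φ p ∈ (inversions n (u * s)).erase (a, b) := by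
    rintro ⟨x, y⟩ hp
    obtain ⟨hx, hy, hxy, hyx⟩ := mem_inversions.1 hp
    by_cases h : s x < s y
    · simp only [φ, if_pos h, mem_erase, mem_inversions, Equiv.Perm.mul_apply, hss]
      refine ⟨fun he => ?_, hs x hx, hs y hy, h, hyx⟩
      obtain ⟨hxa, hyb⟩ := Prod.mk.inj he
      rw [← hss x, ← hss y, hxa, hyb] at hxy
      simp only [s, Equiv.swap_apply_left, Equiv.swap_apply_right] at hxy
      omega
    · simp only [φ, if_neg h, mem_erase, mem_inversions, Equiv.Perm.mul_apply]
      refine ⟨fun he => ?_, hx, hy, hxy, ?_⟩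
      · obtain ⟨rfl, rfl⟩ := Prod.mk.inj he
        omega
      · simp only [s, Equiv.swap_apply_def] at h ⊢
        split_ifs at h ⊢ <;> subst_vars <;> omega
  have hab_mem : (a, b) ∈ inversions n (u * s) :=
    mem_inversions.2 ⟨ha, hb, hab, by simpa [s] using hu⟩
  calc invNum n u ≤ #((inversions n (u * s)).erase (a, b)) :=
        card_le_card_of_injOn φ hmaps fun p hp q hq he => by rw [← hφφ p hp, he, hφφ q hq]
    _ < invNum n (u * s) := card_erase_lt_of_mem hab_mem

lemma apply_lt_apply_of_invNum_lt {a b : ℕ} (ha : a ∈ Icc 1 n) (hb : b ∈ Icc 1 n)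
    (hab : a < b)
    (h : invNum n u < invNum n (u * Equiv.swap a b)) : u a < u b := by
  by_contra hba
  have hlt : u b < u a := (not_lt.1 hba).lt_of_ne (u.injective.ne hab.ne')
  have := invNum_lt_invNum_mul_swap (u := u * Equiv.swap a b) ha hb hab (by simpa using hlt)
  rw [mul_assoc, Equiv.swap_mul_self, mul_one] at this
  exact lt_asymm h this

lemma invNum_inv (hu : IsPermOn n u) : invNum n u⁻¹ = invNum n u := by
  refine card_nbij' (fun p => (u⁻¹ p.2, u⁻¹ p.1)) (fun p => (u p.2, u p.1)) ?_ ?_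
    (fun _ _ => by simp) (fun _ _ => by simp)
  · rintro ⟨x, y⟩ hp
    obtain ⟨hx, hy, hxy, hyx⟩ := mem_inversions.1 hp
    exact mem_inversions.2 ⟨hu.inv.apply_mem hy, hu.inv.apply_mem hx, hyx, by simpa using hxy⟩
  · rintro ⟨x, y⟩ hp
    obtain ⟨hx, hy, hxy, hyx⟩ := mem_inversions.1 hp
    exact mem_inversions.2 ⟨hu.apply_mem hy, hu.apply_mem hx, hyx, by simpa using hxy⟩

end Inversions

namespace MinReps

variable {n : ℕ} {E : Set ℕ} {u : Equiv.Perm ℕ}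

lemma inv_apply_lt (hu' : MinReps n E u) (hu : IsPermOn n u) {k : ℕ} (hk1 : 1 ≤ k) (hkn : k < n)
    (hkE : k ∉ E) : u⁻¹ k < u⁻¹ (k + 1) := by
  have hk : k ∈ Icc 1 n := mem_Icc.2 ⟨hk1, hkn.le⟩
  have hk' : k + 1 ∈ Icc 1 n := mem_Icc.2 ⟨by omega, hkn⟩
  refine apply_lt_apply_of_invNum_lt hk hk' (Nat.lt_succ_self k) ?_
  have hinv : (u⁻¹ * Equiv.swap k (k + 1))⁻¹ = sAdj k * u := by
    rw [mul_inv_rev, Equiv.swap_inv, inv_inv, sAdj]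
  calc invNum n u⁻¹ = invNum n u := invNum_inv hu
    _ < invNum n (sAdj k * u) := hu' k hk1 (by omega) hkE
    _ = invNum n (u⁻¹ * Equiv.swap k (k + 1)) := by
      rw [← hinv, invNum_inv (hu.inv.mul_swap hk hk')]

lemma monotoneOn_inv (hu' : MinReps n E u) (hu : IsPermOn n u) {l L : ℕ} (hLn : L ≤ n)
    (hgap : ∀ k, l < k → k < L → k ∉ E) : MonotoneOn (⇑u⁻¹) (Set.Ioc l L) :=
  monotoneOn_of_le_add_one Set.ordConnected_Ioc fun k _ hk hk' =>
    (hu'.inv_apply_lt hu (by have := hk.1; omega) (by have := hk'.2; omega)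
      (hgap k hk.1 (by have := hk'.2; omega))).le

end MinReps

section Positions

variable {n m j : ℕ} {u v : Equiv.Perm ℕ}

lemma posLT_of_le (hu : IsPermOn n u) (hnm : n ≤ m) (j : ℕ) :
    posLT n m j u = #{r ∈ Icc 1 n | r < j} :=
  congrArg card <| filter_congr fun r hr => by
    have := mem_Icc.1 (hu.apply_mem hr)
    simp only [mem_Icc, and_iff_left_iff_imp]
    omega

lemma posLT_eq_card_Ioc (hu : IsPermOn n u) (hmn : m ≤ n) (j : ℕ) :
    posLT n m j u = #{c ∈ Ioc 0 m | u⁻¹ c < j} := by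
  refine card_nbij' (fun r => u r) (fun c => u⁻¹ c) (fun r hr => ?_) (fun c hc => ?_)
    (fun r _ => by simp) (fun c _ => by simp)
  · simp only [coe_filter, Set.mem_ofPred_eq, mem_Icc, mem_Ioc, Equiv.Perm.coe_inv,
      Equiv.symm_apply_apply] at hr ⊢
    omega
  · simp only [coe_filter, Set.mem_ofPred_eq, mem_Icc, mem_Ioc, Equiv.Perm.coe_inv,
      Equiv.apply_symm_apply] at hc ⊢
    have := hu.inv.apply_mem (mem_Icc.2 ⟨hc.1.1, hc.1.2.trans hmn⟩)
    simp only [mem_Icc, Equiv.Perm.coe_inv] at this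
    omega

lemma posLT_of_lt (hu : IsPermOn n u) (hnj : n < j) (m : ℕ) : posLT n m j u = min m n := by
  rcases le_total m n with hmn | hnm
  · rw [posLT_eq_card_Ioc hu hmn, filter_true_of_mem fun c hc => ?_, Nat.card_Ioc,
      min_eq_left hmn, Nat.sub_zero]
    have hc := mem_Ioc.1 hc
    have := mem_Icc.1 (hu.inv.apply_mem (mem_Icc.2 ⟨hc.1, hc.2.trans hmn⟩))
    omega
  · rw [posLT_of_le hu hnm, filter_true_of_mem fun r hr => (mem_Icc.1 hr).2.trans_lt hnj,
      Nat.card_Icc, min_eq_right hnm, Nat.add_sub_cancel]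

lemma posLT_le_of_forall_mem_Icc (hu : IsPermOn n u) (hv : IsPermOn n v)
    (h : ∀ j ∈ Icc 1 n, posLT n m j v ≤ posLT n m j u) (j : ℕ) :
    posLT n m j v ≤ posLT n m j u := by
  rcases Nat.eq_zero_or_pos j with rfl | hj0
  · simp [posLT]
  rcases le_or_gt j n with hjn | hnj
  · exact h j (mem_Icc.2 ⟨hj0, hjn⟩)
  · rw [posLT_of_lt hu hnj, posLT_of_lt hv hnj]

lemma posLT_congr_of_eq (h : ∀ r < j, u r = v r) (m : ℕ) : posLT n m j u = posLT n m j v :=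
  congrArg card <| filter_congr fun r _ => and_congr_right fun hr => by rw [h r hr]

lemma posLT_add_card_filter {a : ℕ} (haj : a ≤ j) (u : Equiv.Perm ℕ) :
    posLT n m a u + #{r ∈ Icc 1 n | a ≤ r ∧ r < j ∧ u r ∈ Icc 1 m} = posLT n m j u := by
  simp only [posLT, card_filter, ← sum_add_distrib, mem_Icc]
  refine sum_congr rfl fun r _ => ?_
  split_ifs <;> omega

lemma posLT_mul_swap {a b : ℕ} (ha : a ∈ Icc 1 n) (hb : b ∈ Icc 1 n) (hab : a < b)
    (hua : 1 ≤ u a) (hu : u a < u b) (m j : ℕ) :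
    posLT n m j (u * Equiv.swap a b) +
        (if a < j ∧ j ≤ b ∧ u a ≤ m ∧ m < u b then 1 else 0) =
      posLT n m j u := by
  have hb' : b ∈ (Icc 1 n).erase a := mem_erase.2 ⟨hab.ne', hb⟩
  simp only [posLT, card_filter, ← add_sum_erase _ _ ha, ← add_sum_erase _ _ hb']
  rw [sum_congr rfl fun r hr => by
    rw [Equiv.Perm.mul_apply, Equiv.swap_apply_of_ne_of_ne (mem_erase.1 (mem_erase.1 hr).2).1
      (mem_erase.1 hr).1]]
  simp only [Equiv.Perm.mul_apply, Equiv.swap_apply_left, Equiv.swap_apply_right, mem_Icc]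
  split_ifs <;> omega

lemma posLT_eq_min_of_monotoneOn (hu : IsPermOn n u) {l L : ℕ}
    (hmono : MonotoneOn (⇑u⁻¹) (Set.Ioc l L)) (hlm : l ≤ m) (hmL : m ≤ L) (hLn : L ≤ n)
    (j : ℕ) : posLT n m j u = min (posLT n l j u + (m - l)) (posLT n L j u) := by
  have hsplit : ∀ k, l ≤ k → k ≤ n →
      posLT n k j u = posLT n l j u + #{c ∈ Ioc l k | u⁻¹ c < j} := fun k hlk hkn => by
    rw [posLT_eq_card_Ioc hu hkn, posLT_eq_card_Ioc hu (hlk.trans hkn), card_filter, card_filter,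
      card_filter, sum_Ioc_consecutive _ (Nat.zero_le l) hlk]
  rw [hsplit m hlm (hmL.trans hLn), hsplit L (hlm.trans hmL) hLn,
    card_filter_Ioc_lt_eq_min hmono hmL, Nat.add_min_add_left]

end Positions

section TableauCriterion

variable {n a : ℕ} {u v w : Equiv.Perm ℕ}

lemma posLT_le_of_bruhatLE (h : BruhatLE n u v) (hu : IsPermOn n u) (m j : ℕ) :
    posLT n m j v ≤ posLT n m j u := by
  induction h using Relation.ReflTransGen.head_induction_on with
  | refl => exact le_rfl
  | head step _ ih =>
    obtain ⟨hinv, a, b, ha1, hab, hbn, rfl⟩ := step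
    have ha : a ∈ Icc 1 n := mem_Icc.2 ⟨ha1, by omega⟩
    have hb : b ∈ Icc 1 n := mem_Icc.2 ⟨by omega, hbn⟩
    exact (ih (hu.mul_swap ha hb)).trans <| Nat.le.intro <| posLT_mul_swap ha hb hab
      (mem_Icc.1 (hu.apply_mem ha)).1 (apply_lt_apply_of_invNum_lt ha hb hab hinv) m j

lemma card_filter_le_of_posLT_le (hpre : ∀ r < a, w r = v r) {k j : ℕ} (haj : a ≤ j)
    (hdom : posLT n k j v ≤ posLT n k j w) :
    #{r ∈ Icc 1 n | a ≤ r ∧ r < j ∧ v r ∈ Icc 1 k} ≤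
      #{r ∈ Icc 1 n | a ≤ r ∧ r < j ∧ w r ∈ Icc 1 k} := by
  rw [← posLT_add_card_filter haj v, ← posLT_add_card_filter haj w,
    posLT_congr_of_eq hpre] at hdom
  omega

lemma apply_lt_apply_of_posLT_le (hv : IsPermOn n v) (ha : a ∈ Icc 1 n)
    (hpre : ∀ r < a, w r = v r) (hwa : w a ≠ v a)
    (hdom : posLT n (v a) (a + 1) v ≤ posLT n (v a) (a + 1) w) : w a < v a := by
  have hva : a ∈ {r ∈ Icc 1 n | a ≤ r ∧ r < a + 1 ∧ v r ∈ Icc 1 (v a)} := by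
    simpa [ha] using (mem_Icc.1 (hv.apply_mem ha)).1
  obtain ⟨r, hr⟩ := card_pos.1 ((card_pos.2 ⟨a, hva⟩).trans_le
    (card_filter_le_of_posLT_le hpre a.le_succ hdom))
  simp only [mem_filter, mem_Icc] at hr
  obtain rfl : r = a := by omega
  exact hr.2.2.2.2.lt_of_ne hwa

lemma posLT_lt_posLT_of_mem_rectangle (hv : IsPermOn n v) (hw : IsPermOn n w)
    (ha : a ∈ Icc 1 n) (hpre : ∀ r < a, w r = v r)
    (hdom : ∀ j, posLT n (v a) j v ≤ posLT n (v a) j w)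
    {b : ℕ} (hwb : w b ≤ v a) (hgap : ∀ r, a < r → r < b → w r ≤ v a → w r ≤ w a)
    {m j : ℕ} (haj : a < j) (hjb : j ≤ b) (hm : w a ≤ m) (hmb : m < w b) :
    posLT n m j v < posLT n m j w := by
  have hw_eq : #{r ∈ Icc 1 n | a ≤ r ∧ r < j ∧ w r ∈ Icc 1 m} =
      #{r ∈ Icc 1 n | a ≤ r ∧ r < j ∧ w r ∈ Icc 1 (v a)} := by
    refine congrArg card <| filter_congr fun r hr => ?_
    have := mem_Icc.1 (hw.apply_mem hr)
    simp only [mem_Icc]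
    constructor
    · omega
    · rintro ⟨har, hrj, -, hrva⟩
      rcases har.eq_or_lt with rfl | har
      · omega
      · have := hgap r har (by omega) hrva
        omega
  have hv_lt : #{r ∈ Icc 1 n | a ≤ r ∧ r < j ∧ v r ∈ Icc 1 m} <
      #{r ∈ Icc 1 n | a ≤ r ∧ r < j ∧ v r ∈ Icc 1 (v a)} := by
    have hva := mem_Icc.1 (hv.apply_mem ha)
    refine card_lt_card ⟨fun r hr => ?_, fun hsub => ?_⟩
    · simp only [mem_filter, mem_Icc] at hr ⊢
      omega
    · have := hsub (mem_filter.2 ⟨ha, le_rfl, haj, mem_Icc.2 ⟨hva.1, le_rfl⟩⟩)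
      simp only [mem_filter, mem_Icc] at this
      omega
  have := card_filter_le_of_posLT_le hpre haj.le (hdom j)
  rw [← posLT_add_card_filter haj.le v, ← posLT_add_card_filter haj.le w,
    posLT_congr_of_eq hpre]
  omega

lemma lt_inv_apply_of_eq_of_lt (hpre : ∀ r < a, w r = v r) (hwa : w a ≠ v a) :
    a < w⁻¹ (v a) := by
  have hr : w (w⁻¹ (v a)) = v a := by simp
  by_contra! hra
  rcases hra.lt_or_eq with hlt | heq
  · exact hlt.ne (v.injective ((hpre _ hlt).symm.trans hr))
  · exact hwa (by rwa [heq] at hr)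

lemma exists_mul_swap_posLT_le (hv : IsPermOn n v) (hw : IsPermOn n w)
    (hdom : ∀ m j, posLT n m j v ≤ posLT n m j w) (hne : w ≠ v) :
    ∃ a b, 1 ≤ a ∧ a < b ∧ b ≤ n ∧ w a < w b ∧
      ∀ m j, posLT n m j v ≤ posLT n m j (w * Equiv.swap a b) := by
  classical
  have hex : ∃ r, w r ≠ v r := not_forall.1 (mt Equiv.ext hne)
  set a := Nat.find hex
  have hwa : w a ≠ v a := Nat.find_spec hex
  have hpre : ∀ r < a, w r = v r := fun r hr => not_not.1 (Nat.find_min hex hr)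
  have ha : a ∈ Icc 1 n := by
    by_contra h
    exact hwa (by rw [hw a h, hv a h])
  have hva : w a < v a := apply_lt_apply_of_posLT_le hv ha hpre hwa (hdom _ _)
  have hr : a < w⁻¹ (v a) ∧ w a < w (w⁻¹ (v a)) ∧ w (w⁻¹ (v a)) ≤ v a :=
    ⟨lt_inv_apply_of_eq_of_lt hpre hwa, by simpa using hva, by simp⟩
  have hexb : ∃ b, a < b ∧ w a < w b ∧ w b ≤ v a := ⟨_, hr⟩
  set b := Nat.find hexb
  obtain ⟨hab, hwb, hbva⟩ : a < b ∧ w a < w b ∧ w b ≤ v a := Nat.find_spec hexb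
  have hbn : b ≤ n :=
    (Nat.find_min' hexb hr).trans (mem_Icc.1 (hw.inv.apply_mem (hv.apply_mem ha))).2
  have hgap : ∀ r, a < r → r < b → w r ≤ v a → w r ≤ w a := fun r har hrb hrva =>
    not_lt.1 fun hwr => Nat.find_min hexb hrb ⟨har, hwr, hrva⟩
  have ha1 := mem_Icc.1 ha
  have hb : b ∈ Icc 1 n := mem_Icc.2 ⟨by omega, hbn⟩
  refine ⟨a, b, ha1.1, hab, hbn, hwb, fun m j => ?_⟩
  have hswap := posLT_mul_swap ha hb hab (mem_Icc.1 (hw.apply_mem ha)).1 hwb m j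
  split_ifs at hswap with hR
  · obtain ⟨haj, hjb, hm, hmb⟩ := hR
    have := posLT_lt_posLT_of_mem_rectangle hv hw ha hpre (hdom _) hbva hgap haj hjb hm hmb
    omega
  · have := hdom m j
    omega

lemma bruhatLE_of_posLT_le (hu : IsPermOn n u) (hv : IsPermOn n v)
    (hdom : ∀ m j, posLT n m j v ≤ posLT n m j u) : BruhatLE n u v := by
  induction hk : n * n - invNum n u using Nat.strong_induction_on generalizing u with
  | _ k ih =>
    by_cases huv : u = v
    · exact huv ▸ Relation.ReflTransGen.refl
    obtain ⟨a, b, ha1, hab, hbn, hlt, hdom'⟩ := exists_mul_swap_posLT_le hv hu hdom huv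
    have ha : a ∈ Icc 1 n := mem_Icc.2 ⟨ha1, by omega⟩
    have hb : b ∈ Icc 1 n := mem_Icc.2 ⟨by omega, hbn⟩
    have hinv := invNum_lt_invNum_mul_swap ha hb hab hlt
    refine .head ⟨hinv, a, b, ha1, hab, hbn, rfl⟩ (ih _ ?_ (hu.mul_swap ha hb) hdom' rfl)
    have := invNum_le n (u * Equiv.swap a b)
    omega

end TableauCriterion

lemma posLT_le_of_minReps {n : ℕ} {E : Set ℕ} {u v : Equiv.Perm ℕ} (hu : IsPermOn n u)
    (hv : IsPermOn n v) (hu' : MinReps n E u) (hv' : MinReps n E v)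
    (hE : ∀ m ∈ E, ∀ j, posLT n m j v ≤ posLT n m j u) (m j : ℕ) :
    posLT n m j v ≤ posLT n m j u := by
  classical
  rcases le_total n m with hnm | hmn
  · rw [posLT_of_le hu hnm, posLT_of_le hv hnm]
  -- `l ≤ m ≤ L` are the neighbours of `m` in `E ∪ {0, n}`.
  set l := Nat.findGreatest (fun k => k = 0 ∨ k ∈ E) m
  have hL : ∃ L, m ≤ L ∧ (L = n ∨ L ∈ E) := ⟨n, hmn, Or.inl rfl⟩
  set L := Nat.find hL
  have hlm : l ≤ m := Nat.findGreatest_le m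
  have hlP : l = 0 ∨ l ∈ E :=
    Nat.findGreatest_spec (P := fun k => k = 0 ∨ k ∈ E) (Nat.zero_le m) (Or.inl rfl)
  obtain ⟨hmL, hLP⟩ : m ≤ L ∧ (L = n ∨ L ∈ E) := Nat.find_spec hL
  have hLn : L ≤ n := Nat.find_min' hL ⟨hmn, Or.inl rfl⟩
  have hgap : ∀ k, l < k → k < L → k ∉ E := fun k hlk hkL hk => by
    rcases le_or_gt k m with hkm | hmk
    · exact Nat.findGreatest_is_greatest hlk hkm (Or.inr hk)
    · exact Nat.find_min hL hkL ⟨hmk.le, Or.inr hk⟩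
  have hl : posLT n l j v ≤ posLT n l j u := by
    rcases hlP with hl0 | hlE
    · simp [hl0, posLT]
    · exact hE l hlE j
  have hL' : posLT n L j v ≤ posLT n L j u := by
    rcases hLP with hLeq | hLE
    · rw [hLeq, posLT_of_le hu le_rfl, posLT_of_le hv le_rfl]
    · exact hE L hLE j
  rw [posLT_eq_min_of_monotoneOn hu (hu'.monotoneOn_inv hu hLn hgap) hlm hmL hLn,
    posLT_eq_min_of_monotoneOn hv (hv'.monotoneOn_inv hv hLn hgap) hlm hmL hLn]
  omega

theorem bruhatLE_iff_forall_posLT_le {n : ℕ} {E : Set ℕ} {u v : Equiv.Perm ℕ}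
    (hu : IsPermOn n u) (hv : IsPermOn n v) (hu' : MinReps n E u) (hv' : MinReps n E v) :
    BruhatLE n u v ↔ ∀ m ∈ E, ∀ j ∈ Icc 1 n, posLT n m j v ≤ posLT n m j u :=
  ⟨fun h m _ j _ => posLT_le_of_bruhatLE h hu m j, fun h => bruhatLE_of_posLT_le hu hv <|
    posLT_le_of_minReps hu hv hu' hv' fun m hm => posLT_le_of_forall_mem_Icc hu hv (h m hm)⟩

theorem bruhat_iff_b_nonneg_general (n i : ℕ)
    (u v : Equiv.Perm ℕ) (hu : IsPermOn n u) (hv : IsPermOn n v)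
    (hu' : MinReps n {i - 2, i - 1, i} u) (hv' : MinReps n {i - 2, i - 1, i} v) :
    BruhatLE n u v ↔
      ∀ m ∈ ({i - 2, i - 1, i} : Set ℕ), ∀ j, 1 ≤ j → j ≤ n →
        (0 : ℤ) ≤ (posLT n m j u : ℤ) - posLT n m j v := by
  simp only [bruhatLE_iff_forall_posLT_le hu hv hu' hv', mem_Icc, and_imp, sub_nonneg,
    Nat.cast_le]

/-- For `J = S \ {s_(i-2), s_(i-1), s_i}` and `u, v` minimal coset representatives:
`u ≤ v` in the Bruhat order iff `b_(h,j)(u,v) ≥ 0` for `h = 1, 2, 3` (corresponding to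
`m = i-2, i-1, i`) and all `1 ≤ j ≤ n`. -/
theorem bruhat_iff_b_nonneg (n i : ℕ) (hi1 : 3 ≤ i) (hi2 : i ≤ n - 1)
    (u v : Equiv.Perm ℕ) (hu : IsPermOn n u) (hv : IsPermOn n v)
    (hu' : MinReps n {i - 2, i - 1, i} u) (hv' : MinReps n {i - 2, i - 1, i} v) :
    BruhatLE n u v ↔
      ∀ m ∈ ({i - 2, i - 1, i} : Set ℕ), ∀ j, 1 ≤ j → j ≤ n →
        (0 : ℤ) ≤ (posLT n m j u : ℤ) - posLT n m j v :=
  bruhat_iff_b_nonneg_general n i u v hu hv hu' hv'
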